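/- Over the alphabet A = {a,b,c} with set of prohibitions S = {aa, cab, acac}, there is no maximal crucial word: for every k, the word b^k·aca (k copies of b followed by aca) is crucial with respect to S, so crucial words of arbitrarily large length exist. -/

import Mathlib

inductive ABC : Type
  | a | b | c
deriving DecidableEq

open ABC

/-- The prohibition set `{aa, cab, acac}`. -/
def Sabc : Set (List ABC) := {[a,a], [c,a,b], [a,c,a,c]}

/-- A word is crucial w.r.t. `Sabc` if it is free from `Sabc` and appending any
letter creates a prohibited factor. -/
def CrucialAbc (w : List ABC) : Prop :=
  (∀ v ∈ Sabc, ¬ v <:+: w) ∧ ∀ x : ABC, ∃ v ∈ Sabc, v <:+: (w ++ [x])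

/-! No prohibition begins with `b`, so an occurrence of one in `b^k w` cannot start inside the
block `b^k` and must lie in `w`. Hence prepending `b`s preserves cruciality, and `b^k aca` is
crucial because `aca` is. -/

theorem List.not_infix_replicate_append {α : Type*} {x y : α} {t w : List α} (hxy : x ≠ y)
    (h : ¬ x :: t <:+: w) (k : ℕ) : ¬ x :: t <:+: List.replicate k y ++ w := by
  induction k with
  | zero => simpa using h
  | succ n ih =>
    rw [List.replicate_succ, List.cons_append, List.infix_cons_iff]
    rintro (hpre | hinf)
    · exact hxy (List.cons_prefix_cons.mp hpre).1
    · exact ih hinf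

theorem exists_cons_eq_of_mem_Sabc {v : List ABC} (hv : v ∈ Sabc) :
    ∃ x t, v = x :: t ∧ x ≠ b := by
  rcases hv with rfl | rfl | rfl <;> exact ⟨_, _, rfl, by decide⟩

theorem CrucialAbc.replicate_b_append {w : List ABC} (hw : CrucialAbc w) (k : ℕ) :
    CrucialAbc (List.replicate k b ++ w) := by
  refine ⟨fun v hv => ?_, fun x => ?_⟩
  · obtain ⟨x, t, rfl, hx⟩ := exists_cons_eq_of_mem_Sabc hv
    exact List.not_infix_replicate_append hx (hw.1 _ hv) k
  · obtain ⟨v, hv, hinf⟩ := hw.2 x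
    rw [List.append_assoc]
    exact ⟨v, hv, hinf.trans (List.suffix_append _ _).isInfix⟩

theorem crucialAbc_aca : CrucialAbc [a,c,a] := by
  simp only [CrucialAbc, Sabc, Set.mem_insert_iff, Set.mem_singleton_iff, forall_eq_or_imp,
    forall_eq, exists_eq_or_imp, exists_eq_left]
  refine ⟨by decide, fun x => ?_⟩
  cases x <;> decide

/-- There is no maximal crucial word w.r.t. `{aa, cab, acac}`: the word
`b^k a c a` is crucial for every `k`, so there are crucial words of
arbitrarily large length. -/
theorem no_maximal_crucial_word :
    (∀ k : ℕ, CrucialAbc (List.replicate k b ++ [a,c,a])) ∧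
    (∀ N : ℕ, ∃ w : List ABC, CrucialAbc w ∧ N ≤ w.length) := by
  have crucial k := crucialAbc_aca.replicate_b_append k
  exact ⟨crucial, fun N => ⟨_, crucial N, by simp⟩⟩
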